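/- Assume condition (SP_v). Then C_S := sup_{E ∈ ℝ} ‖m_v(E)‖ < ∞, where m_v(E) = (h_S + v_S(E,v) − E)^{−1}; moreover, for every self-adjoint operator w on ℓ²(S) and every ξ ∈ ℝ with |ξ|·C_S·‖w‖ < 1, the operator h_S + ξw + v_S(E,v) − E on ℓ²(S) is invertible for every E ∈ ℝ, i.e. condition (SP_v) holds with h_S replaced by h_S + ξw. -/

import Mathlib

noncomputable section
open Complex Filter MeasureTheory

/-- The Hilbert space `⊕_{j=1}^m ℓ²(ℕ)` of the leads, realized as `ℓ²(Fin m × ℕ)`. -/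
abbrev LeadSp (m : ℕ) : Type := lp (fun _ : Fin m × ℕ => ℂ) 2

/-- The Hilbert space `ℓ²(S)` of the finite sample. -/
abbrev SampSp (S : Type) [Fintype S] : Type := EuclideanSpace ℂ S

/-- The full one-particle Hilbert space `𝔥 = ℓ²(S) ⊕ 𝔥_R`. -/
abbrev FullSp (S : Type) [Fintype S] (m : ℕ) : Type := WithLp 2 (SampSp S × LeadSp m)

/-- Embedding of a pair into the full space. -/
def emb {S : Type} [Fintype S] {m : ℕ} (p : SampSp S × LeadSp m) : FullSp S m :=
  (WithLp.equiv 2 (SampSp S × LeadSp m)).symm p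

/-- Projection of the full space onto the sample component. -/
def prjS {S : Type} [Fintype S] {m : ℕ} (x : FullSp S m) : SampSp S :=
  ((WithLp.equiv 2 (SampSp S × LeadSp m)) x).1

/-- Projection of the full space onto the reservoir component. -/
def prjR {S : Type} [Fintype S] {m : ℕ} (x : FullSp S m) : LeadSp m :=
  ((WithLp.equiv 2 (SampSp S × LeadSp m)) x).2

/-- Kronecker delta at site `x` of lead `j`. -/
def deltaR {m : ℕ} (j : Fin m) (x : ℕ) : LeadSp m := lp.single 2 (j, x) (1 : ℂ)

/-- The set of thresholds `𝒯 = {v_j ± 2 c_R}`. -/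
def thresholds {m : ℕ} (v : Fin m → ℝ) (cR : ℝ) : Set ℝ :=
  {E : ℝ | ∃ j : Fin m, E = v j + 2 * cR ∨ E = v j - 2 * cR}

/-!
On each lead `h_j + v_j` is a half-line discrete Laplacian, so for `Im z ≠ 0` the equation
`(h_j + v_j - z) ψ = β δ₀` has the square-summable solution `ψ x = (β / c_R) u ^ (x + 1)`, where `u`
is the root of `u² - θ u + 1` in the unit disc, `θ = (v_j - z) / c_R`. Hence
`v_S(E) = -∑ⱼ d_j² λ((v_j - E) / c_R) / c_R |φ_j⟩⟨φ_j|`, with `λ` the boundary value of that root;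
`λ` is continuous with `|λ| ≤ 1`, so `v_S` is continuous and uniformly bounded. Therefore
`m_v = (h_S + v_S - E)⁻¹` is continuous, hence bounded on compacts, while `‖m_v(E)‖ ≤ 1` once `|E|`
exceeds `‖h_S‖ + sup ‖v_S‖ + 1`; so `C_S < ∞`. Finally
`h_S + ξ w + v_S - E = (1 + ξ w m_v(E)) (h_S + v_S - E)` is invertible by a Neumann series.
-/

open Topology InnerProductSpace

lemma exists_quadratic_root_norm_lt_one {θ : ℂ} (hθ : θ.im ≠ 0) :
    ∃ u : ℂ, u ^ 2 - θ * u + 1 = 0 ∧ ‖u‖ < 1 := by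
  obtain ⟨s, hs⟩ : ∃ s : ℂ, s ^ 2 = θ ^ 2 - 4 :=
    ⟨(θ ^ 2 - 4) ^ (2⁻¹ : ℂ), cpow_nat_inv_pow _ two_ne_zero⟩
  have hroot₁ : ((θ + s) / 2) ^ 2 - θ * ((θ + s) / 2) + 1 = 0 := by linear_combination hs / 4
  have hroot₂ : ((θ - s) / 2) ^ 2 - θ * ((θ - s) / 2) + 1 = 0 := by linear_combination hs / 4
  by_contra! hge
  have h₁ := hge _ hroot₁
  have h₂ := hge _ hroot₂
  have hprod : (θ + s) / 2 * ((θ - s) / 2) = 1 := by linear_combination -hs / 4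
  have hnorm : ‖(θ + s) / 2‖ * ‖(θ - s) / 2‖ = 1 := by rw [← norm_mul, hprod, norm_one]
  -- both roots lie on the unit circle, so they are conjugate and their sum `θ` is real
  have hunit : ‖(θ + s) / 2‖ = 1 := by nlinarith
  have hconj : (θ - s) / 2 = starRingEnd ℂ ((θ + s) / 2) := by
    have h := congrArg (starRingEnd ℂ ((θ + s) / 2) * ·) hprod
    simp only [← mul_assoc, conj_mul', hunit] at h
    simpa using h
  apply hθ
  have : θ = (θ + s) / 2 + (θ - s) / 2 := by ring
  rw [this, hconj, add_im, conj_im, add_neg_cancel]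

lemma im_pos_of_quadratic_root {θ u : ℂ} (hθ : θ.im < 0) (h : u ^ 2 - θ * u + 1 = 0)
    (hu : ‖u‖ < 1) : 0 < u.im := by
  -- the imaginary part of `conj u * (u ^ 2 - θ u + 1)` gives `θ.im ‖u‖² = u.im (‖u‖² - 1)`
  have key : θ.im * ‖u‖ ^ 2 = u.im * (‖u‖ ^ 2 - 1) := by
    have := congrArg im (congrArg (starRingEnd ℂ u * ·) h)
    simp only [mul_zero, zero_im] at this
    rw [← normSq_eq_norm_sq]
    simp only [pow_two, mul_im, conj_re, add_im, sub_im, one_im, add_zero, conj_im, add_re, sub_re,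
      mul_re, one_re, neg_mul, normSq_apply] at this ⊢
    linear_combination -this
  have hu0 : u ≠ 0 := by rintro rfl; norm_num at h
  have hpos : 0 < ‖u‖ ^ 2 := by positivity
  have hlt : ‖u‖ ^ 2 < 1 := by nlinarith [norm_nonneg u]
  by_contra! him
  nlinarith [mul_nonneg (neg_nonneg.mpr him) (sub_nonneg.mpr hlt.le), mul_neg_of_neg_of_pos hθ hpos]

open scoped Classical in
/-- `decayRoot θ` is the ratio `f (x + 1) / f x` of the decaying solutions of
`f (x + 2) = θ f (x + 1) - f x`; junk value `0` when no root lies in the disc. -/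
def decayRoot (θ : ℂ) : ℂ :=
  if h : ∃ u : ℂ, u ^ 2 - θ * u + 1 = 0 ∧ ‖u‖ < 1 then h.choose else 0

lemma decayRoot_spec {θ : ℂ} (hθ : θ.im ≠ 0) :
    decayRoot θ ^ 2 - θ * decayRoot θ + 1 = 0 ∧ ‖decayRoot θ‖ < 1 := by
  have h := exists_quadratic_root_norm_lt_one hθ
  rw [decayRoot, dif_pos h]
  exact h.choose_spec

/-- `√x` for `x ≥ 0` and `-i √(-x)` for `x < 0`, since `Real.sqrt` vanishes on negative numbers. -/
def sqrtLower (x : ℝ) : ℂ := (√x : ℂ) - I * (√(-x) : ℂ)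

lemma sqrtLower_sq (x : ℝ) : sqrtLower x ^ 2 = x := by
  rcases le_total 0 x with hx | hx
  · have h : (√x : ℂ) ^ 2 = x := by norm_cast; exact Real.sq_sqrt hx
    simp [sqrtLower, Real.sqrt_eq_zero'.mpr (neg_nonpos.mpr hx), h]
  · have h : (√(-x) : ℂ) ^ 2 = -x := by norm_cast; exact Real.sq_sqrt (neg_nonneg.mpr hx)
    rw [sqrtLower, Real.sqrt_eq_zero'.mpr hx, ofReal_zero]
    linear_combination I ^ 2 * h - x * I_sq

/-- The limit of `decayRoot` from the lower half-plane (`tendsto_decayRoot`): it equals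
`(θ ∓ √(θ² - 4)) / 2` for `±θ ≥ 2` and `(θ + i √(4 - θ²)) / 2` for `|θ| < 2`. -/
def boundaryRoot (θ : ℝ) : ℂ := (θ - sqrtLower (θ - 2) * sqrtLower (θ + 2)) / 2

lemma sqrtLower_mul_sqrtLower_sq (θ : ℝ) :
    (sqrtLower (θ - 2) * sqrtLower (θ + 2)) ^ 2 = (θ : ℂ) ^ 2 - 4 := by
  rw [mul_pow, sqrtLower_sq, sqrtLower_sq]; push_cast; ring

lemma boundaryRoot_mul_sub (θ : ℝ) : boundaryRoot θ * (θ - boundaryRoot θ) = 1 := by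
  unfold boundaryRoot; linear_combination (-1 / 4 : ℂ) * sqrtLower_mul_sqrtLower_sq θ

@[fun_prop]
lemma continuous_boundaryRoot : Continuous boundaryRoot := by
  unfold boundaryRoot sqrtLower; fun_prop

lemma boundaryRoot_im_nonneg (θ : ℝ) : 0 ≤ (boundaryRoot θ).im := by
  simp only [boundaryRoot, sqrtLower, neg_sub, neg_add_rev, div_ofNat_im, sub_im, ofReal_im,
    mul_im, sub_re, ofReal_re, mul_re, I_re, zero_mul, I_im, mul_zero, sub_self, sub_zero, one_mul,
    zero_add, zero_sub, mul_neg, neg_mul, neg_neg]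
  positivity

lemma norm_boundaryRoot_le_one (θ : ℝ) : ‖boundaryRoot θ‖ ≤ 1 := by
  set p := sqrtLower (θ - 2) * sqrtLower (θ + 2) with hp
  -- `boundaryRoot θ` and `θ - boundaryRoot θ = (θ + p) / 2` have product one, and the first is
  -- the smaller one because `θ` and `p.re` have the same sign
  have hsign : 0 ≤ θ * p.re := by
    have h₁ : 0 ≤ θ * (√(θ - 2) * √(θ + 2)) := by
      rcases le_total 0 θ with h | h
      · positivity
      · rw [Real.sqrt_eq_zero'.mpr (by linarith)]; simp
    have h₂ : θ * (√(-(θ - 2)) * √(-(θ + 2))) ≤ 0 := by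
      rcases le_total 0 θ with h | h
      · rw [Real.sqrt_eq_zero'.mpr (show -(θ + 2) ≤ 0 by linarith)]; simp
      · exact mul_nonpos_of_nonpos_of_nonneg h (by positivity)
    simp only [hp, sqrtLower, mul_re, sub_re, ofReal_re, mul_im, I_re, I_im, ofReal_im, sub_im]
    nlinarith
  have hle : ‖boundaryRoot θ‖ ≤ ‖(θ : ℂ) - boundaryRoot θ‖ := by
    have : (θ : ℂ) - boundaryRoot θ = (θ + p) / 2 := by rw [boundaryRoot]; ring
    rw [this, boundaryRoot, ← hp, norm_div, norm_div]
    gcongr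
    rw [← sq_le_sq₀ (norm_nonneg _) (norm_nonneg _), ← normSq_eq_norm_sq, ← normSq_eq_norm_sq]
    simp only [normSq_apply, sub_re, add_re, sub_im, add_im, ofReal_re, ofReal_im]
    nlinarith
  have h1 : ‖boundaryRoot θ‖ * ‖(θ : ℂ) - boundaryRoot θ‖ = 1 := by
    rw [← norm_mul, boundaryRoot_mul_sub, norm_one]
  nlinarith [norm_nonneg (boundaryRoot θ)]

lemma eq_or_exists_forall_le_norm_sub {l l' : ℂ} (hprod : l * l' = 1) (hl : ‖l‖ ≤ 1)
    (him : 0 ≤ l.im) :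
    l' = l ∨ ∃ β > 0, ∀ u : ℂ, 0 < u.im → ‖u‖ < 1 → β ≤ ‖u - l'‖ := by
  have hnorm : ‖l‖ * ‖l'‖ = 1 := by rw [← norm_mul, hprod, norm_one]
  rcases hl.lt_or_eq with hlt | hone
  · have hl' : 1 < ‖l'‖ := by nlinarith [norm_nonneg l]
    refine Or.inr ⟨‖l'‖ - 1, by linarith, fun u _ hu => ?_⟩
    linarith [norm_sub_norm_le l' u, norm_sub_rev u l']
  have hconj : l' = starRingEnd ℂ l := by
    have h := congrArg (starRingEnd ℂ l * ·) hprod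
    simp only [← mul_assoc, conj_mul', hone] at h
    simpa using h
  rcases him.lt_or_eq with hpos | hzero
  · refine Or.inr ⟨l.im, hpos, fun u hu _ => ?_⟩
    calc l.im ≤ (u - l').im := by rw [sub_im, hconj, conj_im]; linarith
      _ ≤ ‖u - l'‖ := (le_abs_self _).trans (abs_im_le_norm _)
  · exact Or.inl (hconj.trans (conj_eq_iff_im.mpr hzero.symm))

lemma tendsto_decayRoot (θ : ℝ) :
    Tendsto (fun ε : ℝ => decayRoot (θ - ε * I)) (𝓝[>] 0) (𝓝 (boundaryRoot θ)) := by
  set l := boundaryRoot θ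
  set l' := (θ : ℂ) - l
  -- `u = decayRoot (θ - ε I)` satisfies `(u - l) (u - l') = - ε I u`, so `‖u - l‖ ≤ √ε` if the
  -- roots coincide, and `‖u - l‖ ≤ ε / β` if `l'` keeps a distance `β` from the upper half-disc
  have key : ∀ ε : ℝ, 0 < ε →
      ‖decayRoot (θ - ε * I) - l‖ * ‖decayRoot (θ - ε * I) - l'‖ ≤ ε ∧
        0 < (decayRoot (θ - ε * I)).im ∧ ‖decayRoot (θ - ε * I)‖ < 1 := by
    intro ε hε
    have him : ((θ : ℂ) - ε * I).im = -ε := by simp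
    obtain ⟨hroot, hnorm⟩ := decayRoot_spec (θ := θ - ε * I) (by rw [him]; linarith)
    refine ⟨?_, im_pos_of_quadratic_root (by rw [him]; linarith) hroot hnorm, hnorm⟩
    have hfac : (decayRoot (θ - ε * I) - l) * (decayRoot (θ - ε * I) - l') =
        -(ε * I * decayRoot (θ - ε * I)) := by
      linear_combination hroot + boundaryRoot_mul_sub θ
    rw [← norm_mul, hfac, norm_neg, norm_mul, norm_mul, norm_I, norm_real,
      Real.norm_of_nonneg hε.le, mul_one]
    exact mul_le_of_le_one_right hε.le hnorm.le
  rw [tendsto_iff_norm_sub_tendsto_zero]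
  rcases eq_or_exists_forall_le_norm_sub (boundaryRoot_mul_sub θ) (norm_boundaryRoot_le_one θ)
    (boundaryRoot_im_nonneg θ) with hdouble | ⟨β, hβ, hsep⟩
  · have hsqrt : Tendsto (fun ε : ℝ => √ε) (𝓝[>] 0) (𝓝 0) := by
      simpa using (Real.continuous_sqrt.tendsto 0).mono_left nhdsWithin_le_nhds
    refine squeeze_zero' (Eventually.of_forall fun _ => norm_nonneg _)
      (eventually_nhdsWithin_of_forall fun ε hε => ?_) hsqrt
    have hb := (key ε hε).1
    rw [show l' = l from hdouble] at hb
    exact Real.le_sqrt_of_sq_le (by nlinarith)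
  · have hlin : Tendsto (fun ε : ℝ => ε / β) (𝓝[>] 0) (𝓝 0) := by
      simpa using ((continuous_id.div_const β).tendsto 0).mono_left nhdsWithin_le_nhds
    refine squeeze_zero' (Eventually.of_forall fun _ => norm_nonneg _)
      (eventually_nhdsWithin_of_forall fun ε hε => ?_) hlin
    obtain ⟨hb, him, hnorm⟩ := key ε hε
    rw [le_div_iff₀ hβ]
    exact (mul_le_mul_of_nonneg_left (hsep _ him hnorm) (norm_nonneg _)).trans hb

lemma succ_eq_mul_of_tendsto_zero {θ u : ℂ} (hroot : u ^ 2 - θ * u + 1 = 0) (hu : ‖u‖ ≤ 1)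
    {f : ℕ → ℂ} (hf : Tendsto f atTop (𝓝 0)) (hrec : ∀ x, f (x + 2) = θ * f (x + 1) - f x)
    (x : ℕ) : f (x + 1) = u * f x := by
  set g : ℕ → ℂ := fun x => f (x + 1) - u * f x
  have hstep : ∀ x, g x = u * g (x + 1) := fun x => by
    simp only [g, hrec]; linear_combination f (x + 1) * hroot
  have hiter : ∀ n, g x = u ^ n * g (x + n) := fun n => by
    induction n with
    | zero => simp
    | succ n ih => rw [ih, hstep, ← add_assoc]; ring
  have hg : Tendsto (fun n => g (x + n)) atTop (𝓝 0) := by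
    have h := ((hf.comp (tendsto_add_atTop_nat (x + 1))).sub
      ((hf.comp (tendsto_add_atTop_nat x)).const_mul u))
    simp only [mul_zero, sub_zero] at h
    refine h.congr fun n => ?_
    simp only [Function.comp_apply, g]
    rw [add_comm n, add_right_comm, add_comm n]
  have hle : ∀ n, ‖g x‖ ≤ ‖g (x + n)‖ := fun n => by
    rw [hiter n, norm_mul, norm_pow]
    exact mul_le_of_le_one_left (norm_nonneg _) (pow_le_one₀ (norm_nonneg u) hu)
  have hzero : ‖g x‖ ≤ 0 := ge_of_tendsto' (by simpa using hg.norm) hle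
  exact sub_eq_zero.mp (norm_le_zero_iff.mp hzero)

lemma lp_two_tendsto_cofinite_zero {ι : Type*} (ψ : lp (fun _ : ι => ℂ) 2) :
    Tendsto ψ cofinite (𝓝 0) := by
  have hsum : Summable fun i => ‖ψ i‖ ^ (2 : ℝ) := (lp.memℓp ψ).summable (by norm_num)
  have h := hsum.tendsto_cofinite_zero.sqrt
  rw [Real.sqrt_zero] at h
  rw [tendsto_zero_iff_norm_tendsto_zero]
  refine h.congr fun i => ?_
  rw [Real.rpow_two, Real.sqrt_sq (norm_nonneg _)]

lemma sum_smul_deltaR_apply {m : ℕ} (β : Fin m → ℂ) (k : Fin m) (x : ℕ) :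
    (∑ j, β j • deltaR j 0 : LeadSp m) (k, x) = if x = 0 then β k else 0 := by
  rw [lp.coeFn_sum, Finset.sum_apply]
  split_ifs with hx <;> simp [deltaR, lp.single_apply, Pi.single_apply, Prod.ext_iff, hx]

lemma prjS_emb {S : Type} [Fintype S] {m : ℕ} (a : SampSp S) (b : LeadSp m) :
    prjS (emb (a, b)) = a := rfl

lemma prjR_emb {S : Type} [Fintype S] {m : ℕ} (a : SampSp S) (b : LeadSp m) :
    prjR (emb (a, b)) = b := rfl

lemma lead_solution_apply_zero {m : ℕ} {cR : ℝ} (hcR : cR ≠ 0) {v : Fin m → ℝ}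
    {hR vR : LeadSp m →L[ℂ] LeadSp m}
    (hR0 : ∀ (ψ : LeadSp m) (j : Fin m), (hR ψ) (j, 0) = -(cR : ℂ) * ψ (j, 1))
    (hR1 : ∀ (ψ : LeadSp m) (j : Fin m) (x : ℕ),
      (hR ψ) (j, x + 1) = -(cR : ℂ) * (ψ (j, x) + ψ (j, x + 2)))
    (hvR : ∀ (ψ : LeadSp m) (j : Fin m) (x : ℕ), (vR ψ) (j, x) = (v j : ℂ) * ψ (j, x))
    {z : ℂ} (hz : z.im ≠ 0) {ψ : LeadSp m} {β : Fin m → ℂ}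
    (hψ : ((hR + vR) - z • 1) ψ = ∑ k, β k • deltaR k 0) (j : Fin m) :
    ψ (j, 0) = decayRoot (((v j : ℂ) - z) / cR) * β j / cR := by
  have hcR' : (cR : ℂ) ≠ 0 := ofReal_ne_zero.mpr hcR
  set θ : ℂ := ((v j : ℂ) - z) / cR with hθ
  obtain ⟨hroot, hnorm⟩ := decayRoot_spec (θ := θ) (by simp [hθ, div_ofReal_im, hz, hcR])
  have hvz : (v j : ℂ) - z = cR * θ := by rw [hθ]; field_simp
  have hpt : ∀ x, (hR ψ) (j, x) + cR * θ * ψ (j, x) = if x = 0 then β j else 0 := fun x => by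
    rw [← hvz, ← sum_smul_deltaR_apply, ← hψ]
    simp only [sub_apply, add_apply, smul_apply, one_apply_eq_self, lp.coeFn_sub, lp.coeFn_add,
      lp.coeFn_smul, Pi.sub_apply, Pi.add_apply, Pi.smul_apply, smul_eq_mul, hvR]
    ring
  have hrec : ∀ x, ψ (j, x + 2) = θ * ψ (j, x + 1) - ψ (j, x) := fun x => by
    have h := hpt (x + 1)
    rw [hR1, if_neg x.succ_ne_zero] at h
    refine mul_left_cancel₀ hcR' ?_
    linear_combination -h
  have hdecay : Tendsto (fun x => ψ (j, x)) atTop (𝓝 0) := by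
    rw [← Nat.cofinite_eq_atTop]
    exact (lp_two_tendsto_cofinite_zero ψ).comp (Prod.mk_right_injective j).tendsto_cofinite
  have h1 := succ_eq_mul_of_tendsto_zero hroot hnorm.le hdecay hrec 0
  have h0 := hpt 0
  rw [hR0, if_pos rfl, h1] at h0
  field_simp
  linear_combination decayRoot θ * h0 + cR * ψ (j, 0) * hroot

lemma cmp_eq_sum {S : Type} [Fintype S] {m : ℕ} {cR : ℝ} (hcR : cR ≠ 0) {v : Fin m → ℝ}
    {hR vR : LeadSp m →L[ℂ] LeadSp m}
    (hR0 : ∀ (ψ : LeadSp m) (j : Fin m), (hR ψ) (j, 0) = -(cR : ℂ) * ψ (j, 1))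
    (hR1 : ∀ (ψ : LeadSp m) (j : Fin m) (x : ℕ),
      (hR ψ) (j, x + 1) = -(cR : ℂ) * (ψ (j, x) + ψ (j, x + 2)))
    (hvR : ∀ (ψ : LeadSp m) (j : Fin m) (x : ℕ), (vR ψ) (j, x) = (v j : ℂ) * ψ (j, x))
    {φ : Fin m → SampSp S} {d : Fin m → ℝ} {hT : FullSp S m →L[ℂ] FullSp S m}
    (hhT : ∀ (a : SampSp S) (b : LeadSp m),
      hT (emb (a, b)) = emb
        (∑ j : Fin m, (d j : ℂ) • (b (j, 0) • φ j),
         ∑ j : Fin m, (d j : ℂ) • ((inner ℂ (φ j) a : ℂ) • deltaR j 0)))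
    {RR : ℂ → (LeadSp m →L[ℂ] LeadSp m)}
    (hRR : ∀ z : ℂ, z.im ≠ 0 → ((hR + vR) - z • 1) * RR z = 1)
    {cmp : ℂ → (SampSp S →L[ℂ] SampSp S)}
    (hcmp : ∀ z : ℂ, z.im ≠ 0 → ∀ f : SampSp S,
      cmp z f = prjS (hT (emb (0, RR z (prjR (hT (emb (f, 0))))))))
    {z : ℂ} (hz : z.im ≠ 0) :
    cmp z = ∑ j, ((d j : ℂ) ^ 2 * decayRoot (((v j : ℂ) - z) / cR) / cR) •
      rankOne ℂ (φ j) (φ j) := by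
  ext1 f
  set β : Fin m → ℂ := fun k => d k * inner ℂ (φ k) f
  have hin : hT (emb (f, 0)) = emb (0, ∑ k, β k • deltaR k 0) := by
    rw [hhT]; simp [β, smul_smul]
  have hψ : ((hR + vR) - z • 1) (RR z (∑ k, β k • deltaR k 0)) = ∑ k, β k • deltaR k 0 := by
    rw [← mul_apply_eq_comp, hRR z hz, one_apply_eq_self]
  rw [hcmp z hz f, hin, prjR_emb, hhT, prjS_emb, sum_apply]
  refine Finset.sum_congr rfl fun j _ => ?_
  rw [lead_solution_apply_zero hcR hR0 hR1 hvR hz hψ j, smul_apply,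
    rankOne_apply, smul_smul, smul_smul]
  congr 1
  simp only [β]
  ring

/-- The self-energy `v_S(E, v)` of the leads, in closed form. -/
def leadSelfEnergy {S : Type} [Fintype S] {m : ℕ} (cR : ℝ) (d v : Fin m → ℝ)
    (φ : Fin m → SampSp S) (E : ℝ) : SampSp S →L[ℂ] SampSp S :=
  -∑ j, ((d j : ℂ) ^ 2 * boundaryRoot ((v j - E) / cR) / cR) •
    rankOne ℂ (φ j) (φ j)

lemma continuous_leadSelfEnergy {S : Type} [Fintype S] {m : ℕ} (cR : ℝ) (d v : Fin m → ℝ)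
    (φ : Fin m → SampSp S) : Continuous (leadSelfEnergy cR d v φ) := by
  unfold leadSelfEnergy
  fun_prop

lemma norm_leadSelfEnergy_le {S : Type} [Fintype S] {m : ℕ} (cR : ℝ) (d v : Fin m → ℝ)
    (φ : Fin m → SampSp S) (E : ℝ) :
    ‖leadSelfEnergy cR d v φ E‖ ≤ ∑ j, d j ^ 2 * ‖φ j‖ ^ 2 / |cR| := by
  rw [leadSelfEnergy, norm_neg]
  refine (norm_sum_le _ _).trans (Finset.sum_le_sum fun j _ => ?_)
  rw [norm_smul, norm_rankOne, norm_div, norm_mul, norm_pow, norm_real,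
    norm_real, Real.norm_eq_abs, Real.norm_eq_abs, sq_abs]
  have := norm_boundaryRoot_le_one ((v j - E) / cR)
  calc d j ^ 2 * ‖boundaryRoot ((v j - E) / cR)‖ / |cR| * (‖φ j‖ * ‖φ j‖)
      = d j ^ 2 * ‖φ j‖ ^ 2 / |cR| * ‖boundaryRoot ((v j - E) / cR)‖ := by ring
    _ ≤ d j ^ 2 * ‖φ j‖ ^ 2 / |cR| := mul_le_of_le_one_right (by positivity) this

lemma eq_leadSelfEnergy {S : Type} [Fintype S] {m : ℕ} {cR : ℝ} (hcR : 0 < cR)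
    {v : Fin m → ℝ} {hR vR : LeadSp m →L[ℂ] LeadSp m}
    (hR0 : ∀ (ψ : LeadSp m) (j : Fin m), (hR ψ) (j, 0) = -(cR : ℂ) * ψ (j, 1))
    (hR1 : ∀ (ψ : LeadSp m) (j : Fin m) (x : ℕ),
      (hR ψ) (j, x + 1) = -(cR : ℂ) * (ψ (j, x) + ψ (j, x + 2)))
    (hvR : ∀ (ψ : LeadSp m) (j : Fin m) (x : ℕ), (vR ψ) (j, x) = (v j : ℂ) * ψ (j, x))
    {φ : Fin m → SampSp S} {d : Fin m → ℝ} {hT : FullSp S m →L[ℂ] FullSp S m}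
    (hhT : ∀ (a : SampSp S) (b : LeadSp m),
      hT (emb (a, b)) = emb
        (∑ j : Fin m, (d j : ℂ) • (b (j, 0) • φ j),
         ∑ j : Fin m, (d j : ℂ) • ((inner ℂ (φ j) a : ℂ) • deltaR j 0)))
    {RR : ℂ → (LeadSp m →L[ℂ] LeadSp m)}
    (hRR : ∀ z : ℂ, z.im ≠ 0 → ((hR + vR) - z • 1) * RR z = 1)
    {cmp : ℂ → (SampSp S →L[ℂ] SampSp S)}
    (hcmp : ∀ z : ℂ, z.im ≠ 0 → ∀ f : SampSp S,
      cmp z f = prjS (hT (emb (0, RR z (prjR (hT (emb (f, 0))))))))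
    {vS : ℝ → (SampSp S →L[ℂ] SampSp S)}
    (hvS : ∀ E : ℝ,
      Tendsto (fun ε : ℝ => -cmp ((E : ℂ) + (ε : ℂ) * I))
        (nhdsWithin 0 (Set.Ioi 0)) (nhds (vS E))) :
    vS = leadSelfEnergy cR d v φ := by
  funext E
  refine tendsto_nhds_unique (hvS E) ?_
  have hθ : ∀ (ε : ℝ) (j : Fin m), ((v j : ℂ) - (E + ε * I)) / cR =
      (((v j - E) / cR : ℝ) : ℂ) - ((ε / cR : ℝ) : ℂ) * I := fun ε j => by
    have : (cR : ℂ) ≠ 0 := ofReal_ne_zero.mpr hcR.ne'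
    push_cast
    field_simp
    ring
  have hscale : Tendsto (fun ε : ℝ => ε / cR) (𝓝[>] 0) (𝓝[>] 0) :=
    tendsto_nhdsWithin_iff.mpr
      ⟨by simpa using ((continuous_id.div_const cR).tendsto 0).mono_left nhdsWithin_le_nhds,
        eventually_nhdsWithin_of_forall fun _ hε => div_pos hε hcR⟩
  have hlim : Tendsto (fun ε : ℝ => -∑ j, ((d j : ℂ) ^ 2 *
      decayRoot ((((v j - E) / cR : ℝ) : ℂ) - ((ε / cR : ℝ) : ℂ) * I) / cR) •
        rankOne ℂ (φ j) (φ j)) (𝓝[>] 0) (𝓝 (leadSelfEnergy cR d v φ E)) :=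
    (tendsto_finsetSum _ fun j _ =>
      ((((tendsto_decayRoot _).comp hscale).const_mul _).div_const _).smul_const _).neg
  refine hlim.congr' (eventually_nhdsWithin_of_forall fun ε hε => ?_)
  beta_reduce
  rw [cmp_eq_sum hcR.ne' hR0 hR1 hvR hhT hRR hcmp (by simpa using hε.ne')]
  simp only [hθ]

lemma bddAbove_norm_resolvent {R : Type*} [NormedRing R] [NormedAlgebra ℂ R]
    [HasSummableGeomSeries R] {K M : ℝ → R} (hK : Continuous K) {D : ℝ}
    (hD : ∀ E, ‖K E‖ ≤ D) (hunit : ∀ E : ℝ, IsUnit (K E - (E : ℂ) • 1))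
    (hM : ∀ E : ℝ, M E * (K E - (E : ℂ) • 1) = 1) :
    BddAbove (Set.range fun E => ‖M E‖) := by
  have hinv : ∀ E, M E = Ring.inverse (K E - (E : ℂ) • 1) := fun E => by
    rw [← (hunit E).unit_spec, Ring.inverse_unit,
      Units.inv_eq_of_mul_eq_one_left ((hunit E).unit_spec ▸ hM E)]
  have hcont : Continuous M := continuous_iff_continuousAt.mpr fun E => by
    rw [funext hinv]
    refine ContinuousAt.comp (g := Ring.inverse) ?_ (by fun_prop)
    simpa using NormedRing.inverse_continuousAt (hunit E).unit
  have hfar : ∀ E : ℝ, D + 1 ≤ |E| → ‖M E‖ ≤ ‖(1 : R)‖ := fun E hE => by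
    have hEM : (E : ℂ) • M E = M E * K E - 1 := by
      rw [← hM E, mul_sub, mul_smul_comm, mul_one, sub_sub_cancel]
    have h : |E| * ‖M E‖ ≤ ‖M E‖ * D + ‖(1 : R)‖ := by
      calc |E| * ‖M E‖ = ‖M E * K E - 1‖ := by
            rw [← hEM, norm_smul, norm_real, Real.norm_eq_abs]
        _ ≤ ‖M E‖ * ‖K E‖ + ‖(1 : R)‖ :=
            (norm_sub_le _ _).trans (by gcongr; exact norm_mul_le _ _)
        _ ≤ ‖M E‖ * D + ‖(1 : R)‖ := by gcongr; exact hD E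
    nlinarith [norm_nonneg (M E)]
  obtain ⟨B, hB⟩ :=
    isCompact_Icc.bddAbove_image (hcont.norm.continuousOn (s := Set.Icc (-(D + 1)) (D + 1)))
  refine ⟨max B ‖(1 : R)‖, ?_⟩
  rintro _ ⟨E, rfl⟩
  rcases le_or_gt |E| (D + 1) with hE | hE
  · exact (hB ⟨E, abs_le.mp hE, rfl⟩).trans (le_max_left _ _)
  · exact (hfar E hE.le).trans (le_max_right _ _)

lemma isUnit_add_of_norm_mul_lt_one {R : Type*} [NormedRing R] [HasSummableGeomSeries R]
    {A M W : R} (hA : IsUnit A) (hM : M * A = 1) (h : ‖W‖ * ‖M‖ < 1) : IsUnit (A + W) := by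
  have hfac : A + W = (1 - -(W * M)) * A := by
    rw [sub_neg_eq_add, add_mul, one_mul, mul_assoc, hM, mul_one]
  rw [hfac]
  have hsmall : ‖-(W * M)‖ < 1 := by rw [norm_neg]; exact (norm_mul_le _ _).trans_lt h
  exact (isUnit_one_sub_of_norm_lt_one hsmall).mul hA

theorem mv_uniformly_bounded_and_stability_general
    {S : Type} [Fintype S]
    (m : ℕ)
    (cR : ℝ) (hcR : 0 < cR)
    (hS : SampSp S →L[ℂ] SampSp S)
    (hR : LeadSp m →L[ℂ] LeadSp m)
    (hR0 : ∀ (ψ : LeadSp m) (j : Fin m), (hR ψ) (j, 0) = -(cR : ℂ) * ψ (j, 1))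
    (hR1 : ∀ (ψ : LeadSp m) (j : Fin m) (x : ℕ),
      (hR ψ) (j, x + 1) = -(cR : ℂ) * (ψ (j, x) + ψ (j, x + 2)))
    (φ : Fin m → SampSp S)
    (d : Fin m → ℝ) (v : Fin m → ℝ)
    (vR : LeadSp m →L[ℂ] LeadSp m)
    (hvR : ∀ (ψ : LeadSp m) (j : Fin m) (x : ℕ), (vR ψ) (j, x) = (v j : ℂ) * ψ (j, x))
    (hT : FullSp S m →L[ℂ] FullSp S m)
    (hhT : ∀ (a : SampSp S) (b : LeadSp m),
      hT (emb (a, b)) = emb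
        (∑ j : Fin m, (d j : ℂ) • (b (j, 0) • φ j),
         ∑ j : Fin m, (d j : ℂ) • ((inner ℂ (φ j) a : ℂ) • deltaR j 0)))
    (RR : ℂ → (LeadSp m →L[ℂ] LeadSp m))
    (hRR : ∀ z : ℂ, z.im ≠ 0 →
      ((hR + vR) - z • 1) * RR z = 1 ∧ RR z * ((hR + vR) - z • 1) = 1)
    (cmp : ℂ → (SampSp S →L[ℂ] SampSp S))
    (hcmp : ∀ z : ℂ, z.im ≠ 0 → ∀ f : SampSp S,
      cmp z f = prjS (hT (emb (0, RR z (prjR (hT (emb (f, 0))))))))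
    (vS : ℝ → (SampSp S →L[ℂ] SampSp S))
    (hvS : ∀ E : ℝ,
      Tendsto (fun ε : ℝ => -cmp ((E : ℂ) + (ε : ℂ) * I))
        (nhdsWithin 0 (Set.Ioi 0)) (nhds (vS E)))
    (hSP : ∀ E : ℝ, IsUnit (hS + vS E - (E : ℂ) • 1))
    (mv : ℝ → (SampSp S →L[ℂ] SampSp S))
    (hmv : ∀ E : ℝ,
      (hS + vS E - (E : ℂ) • 1) * mv E = 1 ∧ mv E * (hS + vS E - (E : ℂ) • 1) = 1) :
    BddAbove (Set.range fun E : ℝ => ‖mv E‖) ∧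
    ∀ w : SampSp S →L[ℂ] SampSp S, IsSelfAdjoint w →
      ∀ ξ : ℝ, |ξ| * (⨆ E : ℝ, ‖mv E‖) * ‖w‖ < 1 →
        ∀ E : ℝ, IsUnit (hS + (ξ : ℂ) • w + vS E - (E : ℂ) • 1) := by
  obtain rfl : vS = leadSelfEnergy cR d v φ :=
    eq_leadSelfEnergy hcR hR0 hR1 hvR hhT (fun z hz => (hRR z hz).1) hcmp hvS
  have hbdd : BddAbove (Set.range fun E : ℝ => ‖mv E‖) :=
    bddAbove_norm_resolvent (K := fun E => hS + leadSelfEnergy cR d v φ E)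
      (continuous_const.add (continuous_leadSelfEnergy cR d v φ))
      (fun E => (norm_add_le _ _).trans (add_le_add_right (norm_leadSelfEnergy_le cR d v φ E) _))
      hSP fun E => (hmv E).2
  refine ⟨hbdd, fun w _ ξ hξ E => ?_⟩
  have hsmall : ‖(ξ : ℂ) • w‖ * ‖mv E‖ < 1 := by
    rw [norm_smul, norm_real, Real.norm_eq_abs]
    calc |ξ| * ‖w‖ * ‖mv E‖ ≤ |ξ| * ‖w‖ * ⨆ E : ℝ, ‖mv E‖ := by gcongr; exact le_ciSup hbdd E
      _ < 1 := by linarith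
  convert isUnit_add_of_norm_mul_lt_one (hSP E) (hmv E).2 hsmall using 1
  abel

/-- under (SP_v) the boundary value `m_v(E)` is uniformly bounded,
`C_S = sup_E ‖m_v(E)‖ < ∞`, and for any self-adjoint `w` on `ℓ²(S)` and `ξ ∈ ℝ` with
`|ξ| C_S ‖w‖ < 1`, condition (SP_v) holds with `h_S` replaced by `h_S + ξ w`. -/
theorem mv_uniformly_bounded_and_stability
    {S : Type} [Fintype S] [DecidableEq S] [Nonempty S]
    (m : ℕ) (hm : 0 < m)
    (cR : ℝ) (hcR : 0 < cR)
    (hS : SampSp S →L[ℂ] SampSp S) (hSsa : IsSelfAdjoint hS)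
    (hR : LeadSp m →L[ℂ] LeadSp m)
    (hR0 : ∀ (ψ : LeadSp m) (j : Fin m), (hR ψ) (j, 0) = -(cR : ℂ) * ψ (j, 1))
    (hR1 : ∀ (ψ : LeadSp m) (j : Fin m) (x : ℕ),
      (hR ψ) (j, x + 1) = -(cR : ℂ) * (ψ (j, x) + ψ (j, x + 2)))
    (φ : Fin m → SampSp S) (hφ : ∀ j, ‖φ j‖ = 1)
    (d : Fin m → ℝ) (v : Fin m → ℝ)
    (vR : LeadSp m →L[ℂ] LeadSp m)
    (hvR : ∀ (ψ : LeadSp m) (j : Fin m) (x : ℕ), (vR ψ) (j, x) = (v j : ℂ) * ψ (j, x))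
    (hT : FullSp S m →L[ℂ] FullSp S m)
    (hhT : ∀ (a : SampSp S) (b : LeadSp m),
      hT (emb (a, b)) = emb
        (∑ j : Fin m, (d j : ℂ) • (b (j, 0) • φ j),
         ∑ j : Fin m, (d j : ℂ) • ((inner ℂ (φ j) a : ℂ) • deltaR j 0)))
    (hD : FullSp S m →L[ℂ] FullSp S m)
    (hhD : ∀ (a : SampSp S) (b : LeadSp m), hD (emb (a, b)) = emb (hS a, (hR + vR) b))
    (hv : FullSp S m →L[ℂ] FullSp S m) (hhv : hv = hD + hT)
    (RR : ℂ → (LeadSp m →L[ℂ] LeadSp m))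
    (hRR : ∀ z : ℂ, z.im ≠ 0 →
      ((hR + vR) - z • 1) * RR z = 1 ∧ RR z * ((hR + vR) - z • 1) = 1)
    (cmp : ℂ → (SampSp S →L[ℂ] SampSp S))
    (hcmp : ∀ z : ℂ, z.im ≠ 0 → ∀ f : SampSp S,
      cmp z f = prjS (hT (emb (0, RR z (prjR (hT (emb (f, 0))))))))
    (vS : ℝ → (SampSp S →L[ℂ] SampSp S))
    (hvS : ∀ E : ℝ,
      Tendsto (fun ε : ℝ => -cmp ((E : ℂ) + (ε : ℂ) * I))
        (nhdsWithin 0 (Set.Ioi 0)) (nhds (vS E)))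
    (hSP : ∀ E : ℝ, IsUnit (hS + vS E - (E : ℂ) • 1))
    (mv : ℝ → (SampSp S →L[ℂ] SampSp S))
    (hmv : ∀ E : ℝ,
      (hS + vS E - (E : ℂ) • 1) * mv E = 1 ∧ mv E * (hS + vS E - (E : ℂ) • 1) = 1) :
    BddAbove (Set.range fun E : ℝ => ‖mv E‖) ∧
    ∀ w : SampSp S →L[ℂ] SampSp S, IsSelfAdjoint w →
      ∀ ξ : ℝ, |ξ| * (⨆ E : ℝ, ‖mv E‖) * ‖w‖ < 1 →
        ∀ E : ℝ, IsUnit (hS + (ξ : ℂ) • w + vS E - (E : ℂ) • 1) :=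
  mv_uniformly_bounded_and_stability_general m cR hcR hS hR hR0 hR1 φ d v vR hvR hT hhT RR hRR cmp
    hcmp vS hvS hSP mv hmv
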